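/- Let σ₀ = χ_{(0,1)} and u₀ = K_n χ_{(n−1,n)} on Q = (0,n) ⊂ ℝ with K_n = n² log(e+n)^{-3}, n ≥ 2, and Φ(t) = t log(e+t)². Then: ‖u₀‖_{1,Q} = K_n/n, ‖σ₀‖_{1,Q} = 1/n, and there exist absolute constants c₁ ≤ c₂ such that c₁ K_n log(e+n)²/n ≤ ‖u₀‖_{Φ,Q} ≤ c₂ K_n log(e+n)²/n and c₁ log(e+n)²/n ≤ ‖σ₀‖_{Φ,Q} ≤ c₂ log(e+n)²/n. Consequently ‖u₀‖_{1,Q}‖σ₀‖_{Φ,Q} ≈ 1/log(e+n) while ‖u₀‖_{Φ,Q}‖σ₀‖_{Φ,Q} ≈ log(e+n). -/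

import Mathlib

open MeasureTheory Real Set Filter

/-- The normalized Luxemburg (Orlicz) norm of `v` over the set `E`:
`inf { λ > 0 : μ(E)⁻¹ ∫_E A(|v|/λ) dμ ≤ 1 }`. -/
noncomputable def luxNorm {X : Type*} [MeasurableSpace X] (μ : Measure X)
    (A : ℝ → ℝ) (E : Set X) (v : X → ℝ) : ℝ :=
  sInf {l : ℝ | 0 < l ∧ ∫⁻ x in E, ENNReal.ofReal (A (|v x| / l)) ∂μ ≤ μ E}

/-- A Young function: continuous, convex, increasing on `[0,∞)`, vanishing at `0`,
with superlinear growth at infinity. -/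
def IsYoung (A : ℝ → ℝ) : Prop :=
  ContinuousOn A (Set.Ici 0) ∧ ConvexOn ℝ (Set.Ici 0) A ∧ MonotoneOn A (Set.Ici 0) ∧
    A 0 = 0 ∧ Filter.Tendsto (fun t => A t / t) Filter.atTop Filter.atTop

/-!
Both `u₀` and `σ₀` are multiples `c · χ_I` of the indicator of a unit interval `I ⊆ (0, n)`, so
their Luxemburg norm is the least `λ > 0` with `Φ(c/λ) ≤ n`. Writing `L = log(e + n)`, this
inequality pins `c/λ` down to `n / L²` up to an absolute factor: `t = n/L²` satisfies it since
`log(e + n/L²) ≤ L`, and conversely `Φ(t) ≤ n` forces `t L² ≤ 144 n`, by splitting at `t = √n`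
(above it `log(e + t) ≥ log √n ≥ L/6`, below it `L² ≤ 9 log² n ≤ 144 √n`). The product estimates
then reduce to the identities `(K L²/n)(L²/n) = L` and `(K/n)(L²/n) = 1/L`.
-/

section Indicator

variable {X : Type*} [MeasurableSpace X] (μ : Measure X) {E Q : Set X}

theorem setIntegral_indicator_const_of_subset (hE : MeasurableSet E)
    (hEQ : E ⊆ Q) (c : ℝ) :
    ∫ x in Q, E.indicator (fun _ => c) x ∂μ = μ.real E * c := by
  rw [setIntegral_indicator hE, inter_eq_self_of_subset_right hEQ, setIntegral_const, smul_eq_mul]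

theorem luxNorm_indicator_const {A : ℝ → ℝ} (hA : A 0 = 0) (hE : MeasurableSet E)
    (hEQ : E ⊆ Q) (c : ℝ) :
    luxNorm μ A Q (E.indicator fun _ => c) =
      sInf {l : ℝ | 0 < l ∧ ENNReal.ofReal (A (|c| / l)) * μ E ≤ μ Q} := by
  unfold luxNorm
  congr 1
  ext l
  refine and_congr_right fun _ => ?_
  have hintegrand : (fun x => ENNReal.ofReal (A (|E.indicator (fun _ => c) x| / l))) =
      E.indicator fun _ => ENNReal.ofReal (A (|c| / l)) := by
    ext x
    by_cases hx : x ∈ E <;> simp [hx, hA]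
  rw [hintegrand, lintegral_indicator hE, Measure.restrict_restrict hE,
    inter_eq_self_of_subset_left hEQ, setLIntegral_const]

end Indicator

theorem luxNorm_indicator_unit_Ioo {A : ℝ → ℝ} (hA : A 0 = 0) {a b N : ℝ} (hab : b - a = 1)
    (hsub : Ioo a b ⊆ Ioo 0 N) (c : ℝ) :
    luxNorm volume A (Ioo 0 N) ((Ioo a b).indicator fun _ => c) =
      sInf {l : ℝ | 0 < l ∧ A (|c| / l) ≤ N} := by
  have hmid : a + 1 / 2 ∈ Ioo 0 N := hsub ⟨by linarith, by linarith⟩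
  have hN : 0 ≤ N := hmid.1.le.trans hmid.2.le
  rw [luxNorm_indicator_const volume hA measurableSet_Ioo hsub, Real.volume_Ioo, Real.volume_Ioo,
    hab, sub_zero, ENNReal.ofReal_one]
  simp_rw [mul_one, ENNReal.ofReal_le_ofReal_iff hN]

theorem div_le_sInf_and_sInf_le_div {A : ℝ → ℝ} {c N s T : ℝ} (hc : 0 < c) (hs : 0 < s)
    (hsN : A s ≤ N) (hT : ∀ t, 0 < t → A t ≤ N → t ≤ T) :
    c / T ≤ sInf {l : ℝ | 0 < l ∧ A (c / l) ≤ N} ∧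
      sInf {l : ℝ | 0 < l ∧ A (c / l) ≤ N} ≤ c / s := by
  have hmem : c / s ∈ {l : ℝ | 0 < l ∧ A (c / l) ≤ N} :=
    ⟨div_pos hc hs, by rwa [div_div_cancel₀ hc.ne']⟩
  have hT0 : 0 < T := hs.trans_le (hT s hs hsN)
  refine ⟨le_csInf ⟨_, hmem⟩ fun l ⟨hl, hlN⟩ => ?_, csInf_le ⟨0, fun _ hl => hl.1.le⟩ hmem⟩
  rw [div_le_iff₀ hT0, mul_comm, ← div_le_iff₀ hl]
  exact hT _ (div_pos hc hl) hlN

theorem one_le_log_exp_one_add {x : ℝ} (hx : 0 ≤ x) : 1 ≤ log (exp 1 + x) := by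
  calc 1 = log (exp 1) := (log_exp 1).symm
    _ ≤ log (exp 1 + x) := log_le_log (exp_pos 1) (by linarith)

theorem log_exp_one_add_le_three_mul_log {N : ℝ} (hN : 2 ≤ N) :
    log (exp 1 + N) ≤ 3 * log N := by
  have he : exp 1 < 3 := lt_trans exp_one_lt_d9 (by norm_num)
  have hcube : exp 1 + N ≤ N ^ 3 := by nlinarith [mul_le_mul hN hN (by norm_num) (by linarith)]
  calc log (exp 1 + N) ≤ log (N ^ 3) := log_le_log (by positivity) hcube
    _ = 3 * log N := by rw [log_pow]; norm_num

theorem log_sq_le_sqrt {x : ℝ} (hx : 1 ≤ x) : log x ^ 2 ≤ 16 * √x := by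
  have hlog : log x ≤ x ^ (1 / 4 : ℝ) / (1 / 4) := log_le_rpow_div (by linarith) (by norm_num)
  have hsq : (x ^ (1 / 4 : ℝ)) ^ 2 = √x := by
    rw [sqrt_eq_rpow, ← rpow_natCast, ← rpow_mul (by linarith)]
    norm_num
  nlinarith [log_nonneg hx]

theorem div_log_sq_mul_log_sq_le {N : ℝ} (hN : 0 ≤ N) :
    N / log (exp 1 + N) ^ 2 * log (exp 1 + N / log (exp 1 + N) ^ 2) ^ 2 ≤ N := by
  set L := log (exp 1 + N)
  have hL : 1 ≤ L := one_le_log_exp_one_add hN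
  have hle : log (exp 1 + N / L ^ 2) ≤ L :=
    log_le_log (by positivity) (by gcongr; exact div_le_self hN (one_le_pow₀ hL))
  have hnonneg : 0 ≤ log (exp 1 + N / L ^ 2) := by
    linarith [one_le_log_exp_one_add (div_nonneg hN (sq_nonneg L))]
  calc N / L ^ 2 * log (exp 1 + N / L ^ 2) ^ 2 ≤ N / L ^ 2 * L ^ 2 := by gcongr
    _ = N := div_mul_cancel₀ N (by positivity)

theorem mul_log_sq_le_of_mul_log_sq_le {N t : ℝ} (hN : 2 ≤ N) (ht : 0 < t)
    (h : t * log (exp 1 + t) ^ 2 ≤ N) : t * log (exp 1 + N) ^ 2 ≤ 144 * N := by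
  set L := log (exp 1 + N)
  have hN0 : 0 < N := by linarith
  have hL : L ≤ 3 * log N := log_exp_one_add_le_three_mul_log hN
  have hL0 : 0 ≤ L := zero_le_one.trans (one_le_log_exp_one_add hN0.le)
  rcases le_or_gt √N t with hsqrt | hsqrt
  · have hlog : L / 6 ≤ log (exp 1 + t) := by
      calc L / 6 ≤ log √N := by rw [log_sqrt hN0.le]; linarith
        _ ≤ log (exp 1 + t) := log_le_log (sqrt_pos.2 hN0) (by linarith [exp_pos 1])
    nlinarith [pow_le_pow_left₀ (by positivity) hlog 2]
  · have hLsq : L ^ 2 ≤ 144 * √N := by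
      nlinarith [log_sq_le_sqrt (by linarith : (1 : ℝ) ≤ N), log_nonneg (by linarith : (1 : ℝ) ≤ N)]
    calc t * L ^ 2 ≤ √N * (144 * √N) := mul_le_mul hsqrt.le hLsq (sq_nonneg L) (sqrt_nonneg N)
      _ = 144 * N := by rw [mul_left_comm, mul_self_sqrt hN0.le]

theorem luxNorm_indicator_unit_Ioo_bounds {a b N c : ℝ} (hN : 2 ≤ N) (hc : 0 < c)
    (hab : b - a = 1) (hsub : Ioo a b ⊆ Ioo 0 N) :
    c * log (exp 1 + N) ^ 2 / N / 144 ≤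
        luxNorm volume (fun t => t * log (exp 1 + t) ^ 2) (Ioo 0 N)
          ((Ioo a b).indicator fun _ => c) ∧
      luxNorm volume (fun t => t * log (exp 1 + t) ^ 2) (Ioo 0 N)
          ((Ioo a b).indicator fun _ => c) ≤ c * log (exp 1 + N) ^ 2 / N := by
  have hN0 : 0 < N := by linarith
  have hL : 0 < log (exp 1 + N) := zero_lt_one.trans_le (one_le_log_exp_one_add hN0.le)
  rw [luxNorm_indicator_unit_Ioo (by simp) hab hsub, abs_of_pos hc]
  have key := div_le_sInf_and_sInf_le_div (A := fun t => t * log (exp 1 + t) ^ 2) hc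
    (s := N / log (exp 1 + N) ^ 2) (T := 144 * N / log (exp 1 + N) ^ 2) (by positivity)
    (div_log_sq_mul_log_sq_le hN0.le)
    fun t ht htN => (le_div_iff₀ (by positivity)).2 (mul_log_sq_le_of_mul_log_sq_le hN ht htN)
  convert key using 2 <;> field_simp

/-- Building-block computation: on `Q = (0,n)`, with `u₀ = K_n χ_{(n−1,n)}`,
`σ₀ = χ_{(0,1)}`, `K_n = n² log(e+n)⁻³`, and `Φ(t) = t log(e+t)²`:
`‖u₀‖_{1,Q} = K_n/n`, `‖σ₀‖_{1,Q} = 1/n`, `‖u₀‖_{Φ,Q} ≈ K_n log(e+n)²/n`,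
`‖σ₀‖_{Φ,Q} ≈ log(e+n)²/n`; consequently `‖u₀‖_{1,Q}‖σ₀‖_{Φ,Q} ≈ 1/log(e+n)` and
`‖u₀‖_{Φ,Q}‖σ₀‖_{Φ,Q} ≈ log(e+n)`. -/
theorem building_block_norms :
    ∃ c₁ c₂ : ℝ, 0 < c₁ ∧ c₁ ≤ c₂ ∧ ∀ n : ℕ, 2 ≤ n →
      ∀ (K : ℝ), K = (n : ℝ) ^ 2 / Real.log (Real.exp 1 + n) ^ 3 →
      ∀ (Φ u₀ σ₀ : ℝ → ℝ),
        (∀ t, Φ t = t * Real.log (Real.exp 1 + t) ^ 2) →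
        u₀ = Set.indicator (Set.Ioo ((n : ℝ) - 1) (n : ℝ)) (fun _ => K) →
        σ₀ = Set.indicator (Set.Ioo (0 : ℝ) 1) (fun _ => (1 : ℝ)) →
        ((n : ℝ))⁻¹ * (∫ x in Set.Ioo (0 : ℝ) (n : ℝ), u₀ x) = K / n ∧
        ((n : ℝ))⁻¹ * (∫ x in Set.Ioo (0 : ℝ) (n : ℝ), σ₀ x) = 1 / n ∧
        (c₁ * (K * Real.log (Real.exp 1 + n) ^ 2 / n) ≤
            luxNorm volume Φ (Set.Ioo (0 : ℝ) (n : ℝ)) u₀ ∧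
          luxNorm volume Φ (Set.Ioo (0 : ℝ) (n : ℝ)) u₀ ≤
            c₂ * (K * Real.log (Real.exp 1 + n) ^ 2 / n)) ∧
        (c₁ * (Real.log (Real.exp 1 + n) ^ 2 / n) ≤
            luxNorm volume Φ (Set.Ioo (0 : ℝ) (n : ℝ)) σ₀ ∧
          luxNorm volume Φ (Set.Ioo (0 : ℝ) (n : ℝ)) σ₀ ≤
            c₂ * (Real.log (Real.exp 1 + n) ^ 2 / n)) ∧
        (c₁ / Real.log (Real.exp 1 + n) ≤
            (K / n) * luxNorm volume Φ (Set.Ioo (0 : ℝ) (n : ℝ)) σ₀ ∧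
          (K / n) * luxNorm volume Φ (Set.Ioo (0 : ℝ) (n : ℝ)) σ₀ ≤
            c₂ / Real.log (Real.exp 1 + n)) ∧
        (c₁ * Real.log (Real.exp 1 + n) ≤
            luxNorm volume Φ (Set.Ioo (0 : ℝ) (n : ℝ)) u₀ *
              luxNorm volume Φ (Set.Ioo (0 : ℝ) (n : ℝ)) σ₀ ∧
          luxNorm volume Φ (Set.Ioo (0 : ℝ) (n : ℝ)) u₀ *
              luxNorm volume Φ (Set.Ioo (0 : ℝ) (n : ℝ)) σ₀ ≤
            c₂ * Real.log (Real.exp 1 + n)) := by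
  refine ⟨1 / 144 ^ 2, 1, by norm_num, by norm_num, fun n hn K hK Φ u₀ σ₀ hΦ hu hσ => ?_⟩
  obtain rfl : Φ = fun t => t * log (exp 1 + t) ^ 2 := funext hΦ
  subst hu hσ
  have hN : (2 : ℝ) ≤ n := by exact_mod_cast hn
  have hL : 0 < log (exp 1 + n) := zero_lt_one.trans_le (one_le_log_exp_one_add (by linarith))
  have hK0 : 0 < K := hK ▸ by positivity
  have hsubu : Ioo ((n : ℝ) - 1) n ⊆ Ioo 0 n := Ioo_subset_Ioo (by linarith) le_rfl
  have hsubσ : Ioo (0 : ℝ) 1 ⊆ Ioo 0 n := Ioo_subset_Ioo le_rfl (by linarith)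
  obtain ⟨hu₁, hu₂⟩ := luxNorm_indicator_unit_Ioo_bounds hN hK0 (sub_sub_cancel _ _) hsubu
  obtain ⟨hσ₁, hσ₂⟩ := luxNorm_indicator_unit_Ioo_bounds hN one_pos (sub_zero 1) hsubσ
  rw [one_mul] at hσ₁ hσ₂
  set L := log (exp 1 + n)
  have hprod : K * L ^ 2 / n * (L ^ 2 / n) = L := by rw [hK]; field_simp
  have hratio : K / n * (L ^ 2 / n) = 1 / L := by rw [hK]; field_simp
  have hXu : 0 ≤ K * L ^ 2 / n := by positivity
  have hKn : 0 ≤ K / n := by positivity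
  have hLinv : 0 < 1 / L := by positivity
  refine ⟨?_, ?_, ⟨by linarith, by linarith⟩, ⟨by linarith, by linarith⟩, ⟨?_, ?_⟩, ⟨?_, ?_⟩⟩
  · rw [setIntegral_indicator_const_of_subset volume measurableSet_Ioo hsubu]
    simp [div_eq_inv_mul]
  · rw [setIntegral_indicator_const_of_subset volume measurableSet_Ioo hsubσ]
    simp
  · rw [div_eq_mul_one_div]
    linarith [mul_le_mul_of_nonneg_left hσ₁ hKn]
  · linarith [mul_le_mul_of_nonneg_left hσ₂ hKn]
  · linarith [mul_le_mul hu₁ hσ₁ (by positivity) (hu₁.trans' (by positivity))]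
  · linarith [mul_le_mul hu₂ hσ₂ (hσ₁.trans' (by positivity)) hXu]
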